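/- arXiv:1804.00840 — 5 statements merged into one kernel-verified Lean document; each statement's English description precedes it below -/
import Mathlib

section
/- Let p > 0 and let aₙ, λₙ > 0 for n ≥ 1, with Λₙ = λ₁+⋯+λₙ and Aₙ = λ₁a₁+⋯+λₙaₙ. Then for every N ≥ 1, ∑_{n=1}^N λₙ·(Aₙ/Λₙ)^(-p) - (p/(p+1))·∑_{n=1}^N λₙ·aₙ·(Aₙ/Λₙ)^(-p-1) ≥ (Λ_N/(p+1))·(A_N/Λ_N)^(-p). -/
/-!
Write `xₙ = Aₙ / Λₙ`. By convexity of `t ↦ t ^ (-p)`, its graph lies above the tangent at `x_{N+1}`: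
`(p + 1) x_{N+1}^(-p) ≤ x_N^(-p) + p x_N x_{N+1}^(-p-1)`. Multiplying by `Λ_N / (p + 1)` and using
`A_{N+1} x_{N+1}^(-p-1) = Λ_{N+1} x_{N+1}^(-p)`, the right-hand side of the inequality at `N` plus the
`(N+1)`-st terms of the left-hand side dominates the right-hand side at `N + 1`; for `N = 1` there is equality.
-/

open Real Finset

namespace Real

variable {p : ℝ}

/-- Weighted AM-GM with weights `1/(p+1)`, `p/(p+1)`: the geometric mean of `t ^ (-p)` and `t` is `1`. -/
theorem add_one_le_rpow_neg_add_mul (hp : 0 < p) {t : ℝ} (ht : 0 < t) :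
    p + 1 ≤ t ^ (-p) + p * t := by
  have amgm := geom_mean_le_arith_mean2_weighted (w₁ := 1 / (p + 1)) (w₂ := p / (p + 1))
    (by positivity) (by positivity) (rpow_nonneg ht.le (-p)) ht.le (by field_simp; ring)
  have geom_mean_eq_one : (t ^ (-p)) ^ (1 / (p + 1)) * t ^ (p / (p + 1)) = 1 := by
    rw [← rpow_mul ht.le, ← rpow_add ht, show -p * (1 / (p + 1)) + p / (p + 1) = 0 by ring,
      rpow_zero]
  rw [geom_mean_eq_one] at amgm
  calc p + 1 = (p + 1) * 1 := (mul_one _).symm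
    _ ≤ (p + 1) * (1 / (p + 1) * t ^ (-p) + p / (p + 1) * t) := by gcongr
    _ = t ^ (-p) + p * t := by field_simp

theorem rpow_neg_tangent_le (hp : 0 < p) {x y : ℝ} (hx : 0 < x) (hy : 0 < y) :
    (p + 1) * x ^ (-p) ≤ y ^ (-p) + p * y * x ^ (-p - 1) := by
  have h := add_one_le_rpow_neg_add_mul hp (div_pos hy hx)
  rw [div_rpow hy.le hx.le] at h
  rw [rpow_sub_one hx.ne']
  have hxp : 0 < x ^ (-p) := rpow_pos_of_pos hx _
  calc (p + 1) * x ^ (-p) ≤ (y ^ (-p) / x ^ (-p) + p * (y / x)) * x ^ (-p) := by gcongr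
    _ = y ^ (-p) + p * y * (x ^ (-p) / x) := by field_simp

theorem mul_rpow_sub_one_div {M B : ℝ} (hM : M ≠ 0) (hB : B ≠ 0) (s : ℝ) :
    B * (B / M) ^ (s - 1) = M * (B / M) ^ s := by
  rw [rpow_sub_one (div_ne_zero hB hM)]
  field_simp

end Real

theorem rpow_neg_mean_step {p L A l b : ℝ} (hp : 0 < p) (hL : 0 < L) (hA : 0 < A) (hl : 0 < l)
    (hb : 0 < b) :
    (L + l) / (p + 1) * ((A + b) / (L + l)) ^ (-p) ≤
      L / (p + 1) * (A / L) ^ (-p) +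
        (l * ((A + b) / (L + l)) ^ (-p) - p / (p + 1) * (b * ((A + b) / (L + l)) ^ (-p - 1))) := by
  set x := (A + b) / (L + l)
  have tangent := rpow_neg_tangent_le hp (div_pos (by positivity) (by positivity) : 0 < x)
    (div_pos hA hL)
  have mass : (A + b) * x ^ (-p - 1) = (L + l) * x ^ (-p) :=
    mul_rpow_sub_one_div (by positivity) (by positivity) (-p)
  calc (L + l) / (p + 1) * x ^ (-p)
      = L / (p + 1) * ((p + 1) * x ^ (-p)) + l * x ^ (-p)
          - p / (p + 1) * ((A + b) * x ^ (-p - 1)) := by rw [mass]; field_simp; ring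
    _ ≤ L / (p + 1) * ((A / L) ^ (-p) + p * (A / L) * x ^ (-p - 1)) + l * x ^ (-p)
          - p / (p + 1) * ((A + b) * x ^ (-p - 1)) := by gcongr
    _ = _ := by field_simp; ring

theorem sum_Icc_one_pos {f : ℕ → ℝ} (hf : ∀ n, 1 ≤ n → 0 < f n) {N : ℕ} (hN : 1 ≤ N) :
    0 < ∑ n ∈ Icc 1 N, f n :=
  sum_pos (fun n hn => hf n (mem_Icc.1 hn).1) ⟨1, mem_Icc.2 ⟨le_rfl, hN⟩⟩

theorem stmt3 (p : ℝ) (hp : 0 < p)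
    (a l : ℕ → ℝ) (ha : ∀ n, 1 ≤ n → 0 < a n) (hl : ∀ n, 1 ≤ n → 0 < l n)
    (L A : ℕ → ℝ)
    (hL : ∀ n, L n = ∑ i ∈ Finset.Icc 1 n, l i)
    (hA : ∀ n, A n = ∑ i ∈ Finset.Icc 1 n, l i * a i)
    (N : ℕ) (hN : 1 ≤ N) :
    (∑ n ∈ Finset.Icc 1 N, l n * (A n / L n) ^ (-p))
      - (p / (p + 1)) * ∑ n ∈ Finset.Icc 1 N, l n * a n * (A n / L n) ^ (-p - 1)
    ≥ (L N / (p + 1)) * (A N / L N) ^ (-p) := by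
  have hla : ∀ n, 1 ≤ n → 0 < l n * a n := fun n hn => mul_pos (hl n hn) (ha n hn)
  induction N, hN using Nat.le_induction with
  | base =>
    have mass := mul_rpow_sub_one_div (hl 1 le_rfl).ne' (hla 1 le_rfl).ne' (-p)
    simp only [hL, hA, Icc_self, sum_singleton]
    rw [mass]
    apply ge_of_eq
    field_simp
    ring
  | succ N hN ih =>
    have hL' : L (N + 1) = L N + l (N + 1) := by rw [hL, hL, sum_Icc_succ_top (by omega)]
    have hA' : A (N + 1) = A N + l (N + 1) * a (N + 1) := by rw [hA, hA, sum_Icc_succ_top (by omega)]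
    have step := rpow_neg_mean_step hp (hL N ▸ sum_Icc_one_pos hl hN)
      (hA N ▸ sum_Icc_one_pos hla hN) (hl (N + 1) (by omega)) (hla (N + 1) (by omega))
    rw [sum_Icc_succ_top (by omega), sum_Icc_succ_top (by omega), hL', hA']
    linarith
end

section
/- Fix p > q > 0 and c > 0, and define G(x) = x − (x − c/(p+1))^(q/p) · x^(1−q/p) for x > c/(p+1). Then G is non-increasing on (c/(p+1), ∞). -/
/-!
With `a = c/(p+1)` and `t = q/p ∈ (0,1)`, the inequality `G y ≤ G x` for `a < x ≤ y` reads
`(x-a)^t x^(1-t) + (y-x) ≤ (y-a)^t y^(1-t)`. This is superadditivity of the weighted geometric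
mean `(u, v) ↦ u^t v^(1-t)` (Hölder's inequality), applied to `(x-a, x)` and `(y-x, y-x)`.
-/

theorem Real.rpow_mul_rpow_add_rpow_mul_rpow_le {t u v w z : ℝ} (ht₀ : 0 < t) (ht₁ : t < 1)
    (hu : 0 ≤ u) (hv : 0 ≤ v) (hw : 0 ≤ w) (hz : 0 ≤ z) :
    u ^ t * v ^ (1 - t) + w ^ t * z ^ (1 - t) ≤ (u + w) ^ t * (v + z) ^ (1 - t) := by
  have hs : 1 - t ≠ 0 := by linarith
  have := Real.inner_le_Lp_mul_Lq_of_nonneg Finset.univ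
    (Real.HolderConjugate.inv_one_sub_inv ht₀ ht₁)
    (f := ![u ^ t, w ^ t]) (g := ![v ^ (1 - t), z ^ (1 - t)])
    (by simp only [Finset.mem_univ, forall_const, Fin.forall_fin_two, Matrix.cons_val_zero,
      Matrix.cons_val_one, Matrix.cons_val_fin_one]; exact ⟨by positivity, by positivity⟩)
    (by simp only [Finset.mem_univ, forall_const, Fin.forall_fin_two, Matrix.cons_val_zero,
      Matrix.cons_val_one, Matrix.cons_val_fin_one]; exact ⟨by positivity, by positivity⟩)
  simpa [Fin.sum_univ_two, Real.rpow_rpow_inv, hu, hv, hw, hz, ht₀.ne', hs] using this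

theorem Real.rpow_mul_rpow_add_le_add_rpow_mul_add_rpow {t u v w : ℝ} (ht₀ : 0 < t)
    (ht₁ : t < 1) (hu : 0 ≤ u) (hv : 0 ≤ v) (hw : 0 ≤ w) :
    u ^ t * v ^ (1 - t) + w ≤ (u + w) ^ t * (v + w) ^ (1 - t) := by
  have hww : w ^ t * w ^ (1 - t) = w := by
    rw [← Real.rpow_add' hw (by norm_num), add_sub_cancel, Real.rpow_one]
  simpa only [hww] using rpow_mul_rpow_add_rpow_mul_rpow_le ht₀ ht₁ hu hv hw hw

theorem stmt6 (p q c : ℝ) (hq : 0 < q) (hpq : q < p) (hc : 0 < c) :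
    AntitoneOn (fun x : ℝ => x - (x - c / (p + 1)) ^ (q / p) * x ^ (1 - q / p))
      (Set.Ioi (c / (p + 1))) := by
  have hp : 0 < p := hq.trans hpq
  have ha : 0 < c / (p + 1) := by positivity
  intro x hx y _ hxy
  have hx' : c / (p + 1) < x := Set.mem_Ioi.mp hx
  have key := Real.rpow_mul_rpow_add_le_add_rpow_mul_add_rpow (div_pos hq hp)
    ((div_lt_one hp).mpr hpq) (sub_nonneg.mpr hx'.le) (ha.trans hx').le (sub_nonneg.mpr hxy)
  rw [sub_add_sub_cancel', add_sub_cancel] at key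
  dsimp only
  linarith
end

section
/- Fix p > q > 0 and c > 0, and define G(x) = x − (x − c/(p+1))^(q/p) · x^(1−q/p) for x > c/(p+1). Then lim_{x→∞} G(x) = q·c/(p·(p+1)), and consequently G(x) ≥ q·c/(p·(p+1)) for all x > c/(p+1). -/
/-!
Write `t = q / p ∈ (0, 1)` and `a = c / (p + 1)`, so that `G x = x - (x - a) ^ t * x ^ (1 - t)`.
Factoring out `x`, `G x = -a · (f (a / x) - f 0) / (a / x)` with `f u = (1 - u) ^ t`, a difference
quotient of `f` at `0`; hence `G x → -a · f' 0 = t a`. The lower bound is the weighted AM–GM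
inequality `(x - a) ^ t * x ^ (1 - t) ≤ t (x - a) + (1 - t) x = x - t a`.
-/

open Filter Topology

namespace Real

theorem tendsto_slope_one_sub_rpow_zero (t : ℝ) :
    Tendsto (slope (fun u : ℝ => (1 - u) ^ t) 0) (𝓝[≠] 0) (𝓝 (-t)) := by
  have hderiv : HasDerivAt (fun u : ℝ => (1 - u) ^ t) (-t) 0 := by
    simpa using ((hasDerivAt_id (0 : ℝ)).const_sub 1).rpow_const (p := t) (by norm_num)
  exact hderiv.tendsto_slope

theorem sub_sub_rpow_mul_rpow_eq_slope {a x : ℝ} (t : ℝ) (ha : a ≠ 0) (hx : 0 < x)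
    (hax : a ≤ x) :
    x - (x - a) ^ t * x ^ (1 - t) = -a * slope (fun u : ℝ => (1 - u) ^ t) 0 (a / x) := by
  have hxt : 0 < x ^ t := rpow_pos_of_pos hx t
  have hbase : 1 - a / x = (x - a) / x := by field_simp
  rw [slope_def_field, sub_zero, hbase, div_rpow (sub_nonneg.mpr hax) hx.le,
    rpow_sub hx, rpow_one, sub_zero, one_rpow]
  field_simp
  ring

theorem tendsto_sub_sub_rpow_mul_rpow_atTop (a t : ℝ) :
    Tendsto (fun x : ℝ => x - (x - a) ^ t * x ^ (1 - t)) atTop (𝓝 (t * a)) := by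
  rcases eq_or_ne a 0 with rfl | ha
  · refine tendsto_const_nhds.congr' ?_
    filter_upwards [eventually_gt_atTop 0] with x hx
    rw [sub_zero, ← rpow_add hx, add_sub_cancel, rpow_one, mul_zero, sub_self]
  · have hquot : Tendsto (fun x : ℝ => a / x) atTop (𝓝[≠] 0) := by
      refine tendsto_nhdsWithin_of_tendsto_nhds_of_eventually_within _
        (tendsto_const_nhds.div_atTop tendsto_id) ?_
      filter_upwards [eventually_gt_atTop 0] with x hx
      exact div_ne_zero ha hx.ne'
    have hlim := ((tendsto_slope_one_sub_rpow_zero t).comp hquot).const_mul (-a)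
    rw [neg_mul_neg, mul_comm] at hlim
    refine hlim.congr' ?_
    filter_upwards [eventually_gt_atTop 0, eventually_ge_atTop a] with x hx hax
    exact (sub_sub_rpow_mul_rpow_eq_slope t ha hx hax).symm

theorem mul_le_sub_sub_rpow_mul_rpow {a t x : ℝ} (ht₀ : 0 ≤ t) (ht₁ : t ≤ 1) (hx : 0 ≤ x)
    (hax : a ≤ x) :
    t * a ≤ x - (x - a) ^ t * x ^ (1 - t) := by
  have hamgm := geom_mean_le_arith_mean2_weighted ht₀ (sub_nonneg.mpr ht₁)
    (sub_nonneg.mpr hax) hx (add_sub_cancel t 1)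
  linarith

end Real

theorem stmt7 (p q c : ℝ) (hq : 0 < q) (hpq : q < p) (hc : 0 < c) :
    Filter.Tendsto (fun x : ℝ => x - (x - c / (p + 1)) ^ (q / p) * x ^ (1 - q / p))
      Filter.atTop (nhds (q * c / (p * (p + 1)))) ∧
    ∀ x : ℝ, c / (p + 1) < x →
      x - (x - c / (p + 1)) ^ (q / p) * x ^ (1 - q / p) ≥ q * c / (p * (p + 1)) := by
  have hp : 0 < p := hq.trans hpq
  have hcoeff : q / p * (c / (p + 1)) = q * c / (p * (p + 1)) := by
    rw [div_mul_div_comm]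
  have ha : 0 < c / (p + 1) := div_pos hc (by linarith)
  refine ⟨hcoeff ▸ Real.tendsto_sub_sub_rpow_mul_rpow_atTop _ _, fun x hx => ?_⟩
  rw [ge_iff_le, ← hcoeff]
  exact Real.mul_le_sub_sub_rpow_mul_rpow (div_pos hq hp).le ((div_le_one hp).mpr hpq.le)
    (ha.trans hx).le hx.le
end

section
/- Let p ≥ q > 0 and let f : [a,b] → (0,∞) be continuous with (1/(b−a))·∫_a^b f = ℓ. Then ∫_a^b ((1/(t−a))·∫_a^t f(u) du)^(-p) dt ≤ ((p+1)/p)^q · ∫_a^b ((1/(t−a))·∫_a^t f(u) du)^(-p+q) · f(t)^(-q) dt − (q/(p+1))·(b−a)·ℓ^(-p). -/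
/-!
Write `A` for the running average `t ↦ (t - a)⁻¹ ∫_a^t f`. Since `(t - a) A' = f - A`, the
function `(t - a) A^(-p)`, which vanishes at `a`, has derivative `(p + 1) A^(-p) - p A^(-p-1) f`;
so this expression integrates to `(b - a) ℓ^(-p)`. On the other hand, Bernoulli's inequality
`q + 1 - q s ≤ s^(-q)` (weighted AM-GM) at `s = p f / ((p + 1) A)` gives pointwise
`A^(-p) + q/(p+1) ((p + 1) A^(-p) - p A^(-p-1) f) ≤ ((p + 1)/p)^q A^(-p+q) f^(-q)`,
and integrating yields the inequality.
-/

open Real Set Filter Topology MeasureTheory intervalIntegral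

theorem add_one_sub_mul_le_rpow_neg {q s : ℝ} (hq : 0 ≤ q) (hs : 0 < s) :
    q + 1 - q * s ≤ s ^ (-q) := by
  have hq1 : 0 < q + 1 := by linarith
  have amgm := geom_mean_le_arith_mean2_weighted (by positivity : 0 ≤ 1 / (q + 1))
    (by positivity : 0 ≤ q / (q + 1)) (rpow_nonneg hs.le (-q)) hs.le
    (by field_simp; ring)
  rw [← rpow_mul hs.le, ← rpow_add hs, show -q * (1 / (q + 1)) + q / (q + 1) = 0 by ring,
    rpow_zero] at amgm
  have := mul_le_mul_of_nonneg_left amgm hq1.le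
  field_simp at this
  linarith

theorem rpow_neg_add_mul_le {p q x y : ℝ} (hp : 0 < p) (hq : 0 ≤ q) (hx : 0 < x) (hy : 0 < y) :
    x ^ (-p) + q / (p + 1) * ((p + 1) * x ^ (-p) - p * (x ^ (-p - 1) * y))
      ≤ ((p + 1) / p) ^ q * (x ^ (-p + q) * y ^ (-q)) := by
  have hs : 0 < p * y / ((p + 1) * x) := by positivity
  have hlhs : x ^ (-p) + q / (p + 1) * ((p + 1) * x ^ (-p) - p * (x ^ (-p - 1) * y))
      = x ^ (-p) * (q + 1 - q * (p * y / ((p + 1) * x))) := by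
    rw [rpow_sub_one hx.ne']
    field_simp
    ring
  have hrhs : ((p + 1) / p) ^ q * (x ^ (-p + q) * y ^ (-q))
      = x ^ (-p) * (p * y / ((p + 1) * x)) ^ (-q) := by
    rw [rpow_neg hs.le, ← inv_rpow hs.le, inv_div,
      div_rpow (x := (p + 1) * x) (by positivity) (by positivity),
      mul_rpow (by positivity) hx.le, mul_rpow hp.le hy.le, rpow_add hx, rpow_neg hy.le,
      div_rpow (by positivity) hp.le]
    field_simp
  rw [hlhs, hrhs]
  exact mul_le_mul_of_nonneg_left (add_one_sub_mul_le_rpow_neg hq hs) (by positivity)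

-- At `t = a` the formula would read `0⁻¹ * 0 = 0`; the value `f a` makes the average continuous.
noncomputable def runningAverage (f : ℝ → ℝ) (a : ℝ) : ℝ → ℝ :=
  Function.update (fun t => (t - a)⁻¹ * ∫ u in a..t, f u) a (f a)

namespace runningAverage

variable {f : ℝ → ℝ} {a b : ℝ}

theorem apply_of_ne {t : ℝ} (ht : t ≠ a) :
    runningAverage f a t = (t - a)⁻¹ * ∫ u in a..t, f u :=
  Function.update_of_ne ht _ _

theorem apply_self : runningAverage f a a = f a := Function.update_self _ _ _

theorem tendsto_nhdsGT (hab : a < b) (hf : ContinuousOn f (Icc a b)) :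
    Tendsto (fun t => (t - a)⁻¹ * ∫ u in a..t, f u) (𝓝[>] a) (𝓝 (f a)) := by
  have hIcc : Icc a b ∈ 𝓝[>] a := Icc_mem_nhdsGT_of_mem ⟨le_rfl, hab⟩
  have hderiv : HasDerivWithinAt (fun t => ∫ u in a..t, f u) (f a) (Ici a) a :=
    integral_hasDerivWithinAt_right (t := Ioi a) IntervalIntegrable.refl
      ⟨Icc a b, hIcc, hf.aestronglyMeasurable measurableSet_Icc⟩
      ((hf a ⟨le_rfl, hab.le⟩).mono_of_mem_nhdsWithin hIcc)
  rw [hasDerivWithinAt_iff_tendsto_slope, Ici_sdiff_left] at hderiv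
  refine hderiv.congr fun t => ?_
  rw [slope_def_field, integral_same, sub_zero, div_eq_inv_mul]

theorem continuousOn (hab : a < b) (hf : ContinuousOn f (Icc a b)) :
    ContinuousOn (runningAverage f a) (Icc a b) := by
  intro t ht
  rcases eq_or_ne t a with rfl | hta
  · rw [runningAverage, continuousWithinAt_update_same]
    exact (tendsto_nhdsGT hab hf).mono_left (nhdsWithin_mono _ fun x hx =>
      lt_of_le_of_ne hx.1.1 (Ne.symm hx.2))
  · have hprim : ContinuousOn (fun t => ∫ u in a..t, f u) (Icc a b) := by
      simpa [uIcc_of_le hab.le] using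
        continuousOn_primitive_interval (μ := volume) (a := a) (b := b)
          (by simpa [uIcc_of_le hab.le] using hf.integrableOn_Icc)
    refine ContinuousWithinAt.congr_of_eventuallyEq ?_
      (eventually_nhdsWithin_of_eventually_nhds ((isOpen_ne.eventually_mem hta).mono
        fun x hx => apply_of_ne hx)) (apply_of_ne hta)
    exact ((continuousAt_id.sub continuousAt_const).inv₀
      (sub_ne_zero.2 hta)).continuousWithinAt.mul (hprim t ht)

theorem pos (hf : ContinuousOn f (Icc a b)) (hfpos : ∀ t ∈ Icc a b, 0 < f t) {t : ℝ}
    (ht : t ∈ Icc a b) : 0 < runningAverage f a t := by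
  rcases eq_or_ne t a with rfl | hta
  · rw [apply_self]; exact hfpos t ht
  · have hat : a < t := lt_of_le_of_ne ht.1 (Ne.symm hta)
    rw [apply_of_ne hta]
    refine mul_pos (inv_pos.2 (sub_pos.2 hat)) (intervalIntegral_pos_of_pos_on ?_ ?_ hat)
    · exact (hf.mono (Icc_subset_Icc le_rfl ht.2)).intervalIntegrable_of_Icc hat.le
    · exact fun x hx => hfpos x ⟨hx.1.le, hx.2.le.trans ht.2⟩

theorem hasDerivAt {t : ℝ} (ht : t ∈ Ioo a b) (hf : ContinuousOn f (Icc a b)) :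
    HasDerivAt (runningAverage f a) ((f t - runningAverage f a t) / (t - a)) t := by
  have hta : t - a ≠ 0 := sub_ne_zero.2 ht.1.ne'
  have hIcc : Icc a b ∈ 𝓝 t := Icc_mem_nhds ht.1 ht.2
  have hF : HasDerivAt (fun s => ∫ u in a..s, f u) (f t) t :=
    integral_hasDerivAt_right
      ((hf.mono (Icc_subset_Icc le_rfl ht.2.le)).intervalIntegrable_of_Icc ht.1.le)
      ⟨Icc a b, hIcc, hf.aestronglyMeasurable measurableSet_Icc⟩
      ((hf t ⟨ht.1.le, ht.2.le⟩).continuousAt hIcc)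
  refine ((((hasDerivAt_id t).sub_const a).inv hta).mul hF).congr_of_eventuallyEq
    ((isOpen_ne.eventually_mem ht.1.ne').mono fun x hx => apply_of_ne hx) |>.congr_deriv ?_
  rw [apply_of_ne ht.1.ne', Pi.inv_apply, id]
  field_simp
  ring

theorem continuousOn_rpow (hab : a < b) (hf : ContinuousOn f (Icc a b))
    (hfpos : ∀ t ∈ Icc a b, 0 < f t) (e : ℝ) :
    ContinuousOn (fun t => runningAverage f a t ^ e) (Icc a b) :=
  (continuousOn hab hf).rpow_const fun _ ht => Or.inl (pos hf hfpos ht).ne'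

theorem hasDerivAt_mul_rpow (p : ℝ) {t : ℝ} (ht : t ∈ Ioo a b) (hf : ContinuousOn f (Icc a b))
    (hfpos : ∀ t ∈ Icc a b, 0 < f t) :
    HasDerivAt (fun s => (s - a) * runningAverage f a s ^ (-p))
      ((p + 1) * runningAverage f a t ^ (-p)
        - p * (runningAverage f a t ^ (-p - 1) * f t)) t := by
  have hA := pos hf hfpos (Ioo_subset_Icc_self ht)
  have hta : t - a ≠ 0 := sub_ne_zero.2 ht.1.ne'
  refine (((hasDerivAt_id t).sub_const a).mul
    ((hasDerivAt ht hf).rpow_const (p := -p) (Or.inl hA.ne'))).congr_deriv ?_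
  rw [rpow_sub_one hA.ne', id]
  field_simp
  ring

theorem integral_deriv_mul_rpow (p : ℝ) (hab : a < b) (hf : ContinuousOn f (Icc a b))
    (hfpos : ∀ t ∈ Icc a b, 0 < f t) :
    ∫ t in a..b, ((p + 1) * runningAverage f a t ^ (-p)
        - p * (runningAverage f a t ^ (-p - 1) * f t))
      = (b - a) * runningAverage f a b ^ (-p) := by
  have hrpow := continuousOn_rpow hab hf hfpos
  rw [integral_eq_sub_of_hasDeriv_right_of_le hab.le
    (((continuousOn_id.sub continuousOn_const).mul (hrpow (-p))))
    (fun t ht => (hasDerivAt_mul_rpow p ht hf hfpos).hasDerivWithinAt)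
    ((continuousOn_const.mul (hrpow (-p))).sub
      (continuousOn_const.mul ((hrpow (-p - 1)).mul hf)) |>.intervalIntegrable_of_Icc hab.le)]
  simp

theorem integral_rpow_neg_le {p q : ℝ} (hp : 0 < p) (hq : 0 ≤ q) (hab : a < b)
    (hf : ContinuousOn f (Icc a b)) (hfpos : ∀ t ∈ Icc a b, 0 < f t) :
    ∫ t in a..b, runningAverage f a t ^ (-p)
      ≤ ((p + 1) / p) ^ q * (∫ t in a..b, runningAverage f a t ^ (-p + q) * f t ^ (-q))
        - q / (p + 1) * (b - a) * runningAverage f a b ^ (-p) := by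
  have hrpow := continuousOn_rpow hab hf hfpos
  have hf_rpow : ContinuousOn (fun t => f t ^ (-q)) (Icc a b) :=
    hf.rpow_const fun t ht => Or.inl (hfpos t ht).ne'
  have hderiv : ContinuousOn (fun t => (p + 1) * runningAverage f a t ^ (-p)
      - p * (runningAverage f a t ^ (-p - 1) * f t)) (Icc a b) :=
    (continuousOn_const.mul (hrpow (-p))).sub (continuousOn_const.mul ((hrpow (-p - 1)).mul hf))
  have hint {g : ℝ → ℝ} (hg : ContinuousOn g (Icc a b)) : IntervalIntegrable g volume a b :=
    hg.intervalIntegrable_of_Icc hab.le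
  have hmono : ∫ t in a..b, (runningAverage f a t ^ (-p) + q / (p + 1) * ((p + 1) *
        runningAverage f a t ^ (-p) - p * (runningAverage f a t ^ (-p - 1) * f t)))
      ≤ ∫ t in a..b, ((p + 1) / p) ^ q * (runningAverage f a t ^ (-p + q) * f t ^ (-q)) :=
    integral_mono_on hab.le (hint ((hrpow (-p)).add (continuousOn_const.mul hderiv)))
      (hint (continuousOn_const.mul ((hrpow (-p + q)).mul hf_rpow)))
      fun t ht => rpow_neg_add_mul_le hp hq (pos hf hfpos ht) (hfpos t ht)
  rw [integral_add (hint (hrpow (-p))) ((hint hderiv).const_mul _),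
    intervalIntegral.integral_const_mul, intervalIntegral.integral_const_mul,
    integral_deriv_mul_rpow p hab hf hfpos] at hmono
  linarith

theorem integral_comp (hab : a ≤ b) (φ : ℝ → ℝ → ℝ) :
    ∫ t in a..b, φ t (runningAverage f a t)
      = ∫ t in a..b, φ t ((t - a)⁻¹ * ∫ u in a..t, f u) :=
  integral_congr_ae (ae_of_all _ fun t ht => by
    rw [apply_of_ne (uIoc_of_le hab ▸ ht).1.ne'])

end runningAverage

theorem stmt9 (p q ℓ a b : ℝ) (hq : 0 < q) (hpq : q ≤ p) (hab : a < b)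
    (f : ℝ → ℝ) (hf : ContinuousOn f (Set.Icc a b))
    (hfpos : ∀ t ∈ Set.Icc a b, 0 < f t)
    (hℓ : (b - a)⁻¹ * ∫ u in a..b, f u = ℓ) :
    (∫ t in a..b, ((t - a)⁻¹ * ∫ u in a..t, f u) ^ (-p))
      ≤ ((p + 1) / p) ^ q *
          (∫ t in a..b, ((t - a)⁻¹ * ∫ u in a..t, f u) ^ (-p + q) * (f t) ^ (-q))
        - (q / (p + 1)) * (b - a) * ℓ ^ (-p) := by
  have key := runningAverage.integral_rpow_neg_le (hq.trans_le hpq) hq.le hab hf hfpos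
  rwa [runningAverage.apply_of_ne hab.ne', hℓ,
    runningAverage.integral_comp hab.le (fun _ x => x ^ (-p)),
    runningAverage.integral_comp hab.le (fun t x => x ^ (-p + q) * f t ^ (-q))] at key
end

section
/- Fix p ≥ q > 0 and ℓ > 0. For a ∈ (−1/p, 0) define L_a = ∫_0^1 ((1/t)∫_0^t g_a)^(−p) dt − ((p+1)/p)^q · ∫_0^1 ((1/t)∫_0^t g_a)^(−p+q)·g_a(t)^(−q) dt, where g_a(t) = ℓ(1−a)t^(−a). Then L_a = ℓ^(−p)·(1 − (1−a)^(−q)·((p+1)/p)^q)/(1+ap), and lim_{a→(−1/p)⁺} L_a = −(q/(p+1))·ℓ^(−p). -/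
open Filter Set intervalIntegral Topology

/-!
For `g(t) = ℓ(1-a)t^(-a)` the running average is `G(t) = ℓ t^(-a)`, so `g = (1-a) G` and both
integrands are constant multiples of `G^(-p) = ℓ^(-p) t^(ap)`, whose integral over `[0,1]` is
`ℓ^(-p)/(1+ap)`. This gives the closed form of `L_a`. Its numerator `1 - (1-a)^(-q)((p+1)/p)^q`
vanishes at `a = -1/p`, as does `1 + ap = p(a + 1/p)`, so the limit is a derivative.
-/

namespace HardyRemainder

lemma integral_mul_rpow_neg {a : ℝ} (ha : a < 1) (ℓ t : ℝ) :
    ∫ u in (0:ℝ)..t, ℓ * (1 - a) * u ^ (-a) = ℓ * t ^ (1 - a) := by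
  rw [integral_const_mul, integral_rpow (Or.inl (by linarith)), Real.zero_rpow (by linarith),
    show -a + 1 = 1 - a by ring, sub_zero]
  field_simp [(by linarith : (1 - a) ≠ 0)]

/-- At `t = 0` both sides vanish, by `0⁻¹ = 0` and `0 ^ (-a) = 0`. -/
lemma inv_mul_integral_mul_rpow_neg {a : ℝ} (ha : a < 1) (ha0 : a ≠ 0) (ℓ : ℝ) {t : ℝ}
    (ht : 0 ≤ t) :
    t⁻¹ * ∫ u in (0:ℝ)..t, ℓ * (1 - a) * u ^ (-a) = ℓ * t ^ (-a) := by
  rw [integral_mul_rpow_neg ha ℓ t]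
  rcases ht.eq_or_lt with rfl | htpos
  · simp [Real.zero_rpow (neg_ne_zero.mpr ha0)]
  · rw [show 1 - a = 1 + -a by ring, Real.rpow_add htpos, Real.rpow_one]
    field_simp

lemma mul_rpow_neg_rpow {ℓ t : ℝ} (hℓ : 0 ≤ ℓ) (ht : 0 ≤ t) (a p : ℝ) :
    (ℓ * t ^ (-a)) ^ (-p) = ℓ ^ (-p) * t ^ (a * p) := by
  rw [Real.mul_rpow hℓ (Real.rpow_nonneg ht _), ← Real.rpow_mul ht, neg_mul_neg]

lemma rpow_neg_add_mul_rpow_neg_mul {G : ℝ} (hG : 0 ≤ G) {s : ℝ} (hs : 0 ≤ s) {p : ℝ} (hp : p ≠ 0)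
    (q : ℝ) : G ^ (-p + q) * (s * G) ^ (-q) = s ^ (-q) * G ^ (-p) := by
  rw [Real.mul_rpow hs hG, mul_left_comm, ← Real.rpow_add' hG (by simpa using hp),
    add_neg_cancel_right]

lemma integral_mul_rpow_neg_rpow {ℓ : ℝ} (hℓ : 0 ≤ ℓ) {a p : ℝ} (hap : -1 < a * p) :
    ∫ t in (0:ℝ)..1, (ℓ * t ^ (-a)) ^ (-p) = ℓ ^ (-p) / (1 + a * p) := by
  have hcongr : EqOn (fun t : ℝ => (ℓ * t ^ (-a)) ^ (-p)) (fun t => ℓ ^ (-p) * t ^ (a * p))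
      (uIcc 0 1) := fun t ht =>
    mul_rpow_neg_rpow hℓ (uIcc_of_le (zero_le_one (α := ℝ)) ▸ ht).1 a p
  rw [integral_congr hcongr, integral_const_mul, integral_rpow (Or.inl hap), Real.one_rpow,
    Real.zero_rpow (by linarith), sub_zero, add_comm, mul_one_div]

lemma integral_sub_mul_integral_eq {ℓ a p : ℝ} (hℓ : 0 ≤ ℓ) (ha : a < 1) (ha0 : a ≠ 0)
    (hap : -1 < a * p) (hp : p ≠ 0) (q K : ℝ) :
    (∫ t in (0:ℝ)..1, (t⁻¹ * ∫ u in (0:ℝ)..t, ℓ * (1 - a) * u ^ (-a)) ^ (-p))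
        - K * ∫ t in (0:ℝ)..1, (t⁻¹ * ∫ u in (0:ℝ)..t, ℓ * (1 - a) * u ^ (-a)) ^ (-p + q)
          * (ℓ * (1 - a) * t ^ (-a)) ^ (-q)
      = ℓ ^ (-p) * (1 - (1 - a) ^ (-q) * K) / (1 + a * p) := by
  have haverage : ∀ t ∈ uIcc (0:ℝ) 1,
      t⁻¹ * ∫ u in (0:ℝ)..t, ℓ * (1 - a) * u ^ (-a) = ℓ * t ^ (-a) := fun t ht =>
    inv_mul_integral_mul_rpow_neg ha ha0 ℓ (uIcc_of_le (zero_le_one (α := ℝ)) ▸ ht).1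
  have hfirst : EqOn (fun t : ℝ => (t⁻¹ * ∫ u in (0:ℝ)..t, ℓ * (1 - a) * u ^ (-a)) ^ (-p))
      (fun t => (ℓ * t ^ (-a)) ^ (-p)) (uIcc 0 1) := fun t ht =>
    congrArg (· ^ (-p)) (haverage t ht)
  have hsecond : EqOn
      (fun t : ℝ => (t⁻¹ * ∫ u in (0:ℝ)..t, ℓ * (1 - a) * u ^ (-a)) ^ (-p + q)
        * (ℓ * (1 - a) * t ^ (-a)) ^ (-q))
      (fun t => (1 - a) ^ (-q) * (ℓ * t ^ (-a)) ^ (-p)) (uIcc 0 1) := fun t ht => by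
    have ht0 : 0 ≤ t := (uIcc_of_le (zero_le_one (α := ℝ)) ▸ ht).1
    dsimp only
    rw [haverage t ht, show ℓ * (1 - a) * t ^ (-a) = (1 - a) * (ℓ * t ^ (-a)) by ring]
    exact rpow_neg_add_mul_rpow_neg_mul (by positivity) (by linarith) hp q
  rw [integral_congr hsecond, integral_const_mul, integral_congr hfirst,
    integral_mul_rpow_neg_rpow hℓ hap]
  ring

lemma hasDerivAt_one_sub_rpow_neg_mul {c : ℝ} (hc : 0 < c) (q : ℝ) :
    HasDerivAt (fun a : ℝ => (1 - a) ^ (-q) * c ^ q) (q / c) (1 - c) := by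
  have hsub : HasDerivAt (fun a : ℝ => 1 - a) (-1) (1 - c) := (hasDerivAt_id _).const_sub 1
  have hrpow := (Real.hasDerivAt_rpow_const (p := -q) (Or.inl (by simpa using hc.ne'))).comp
    (1 - c) hsub
  refine (hrpow.mul_const (c ^ q)).congr_deriv ?_
  rw [sub_sub_cancel, mul_neg_one, neg_mul_eq_neg_mul, neg_neg, mul_assoc, ← Real.rpow_add hc,
    show -q - 1 + q = -1 by ring, Real.rpow_neg_one, div_eq_mul_inv]

lemma tendsto_one_sub_rpow_neg_div {p : ℝ} (hp : 0 < p) (q : ℝ) :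
    Tendsto (fun a => (1 - (1 - a) ^ (-q) * ((p + 1) / p) ^ q) / (1 + a * p))
      (𝓝[>] (-1 / p)) (𝓝 (-(q / (p + 1)))) := by
  have hx : 1 - (p + 1) / p = -1 / p := by field_simp; ring
  set c := (p + 1) / p
  have hc : 0 < c := by positivity
  set h : ℝ → ℝ := fun a => 1 - (1 - a) ^ (-q) * c ^ q
  have hderiv : HasDerivAt h (-(q / c)) (-1 / p) :=
    hx ▸ (hasDerivAt_one_sub_rpow_neg_mul hc q).const_sub 1
  have hzero : h (-1 / p) = 0 := by
    simp only [h, ← hx, sub_sub_cancel, ← Real.rpow_add hc, neg_add_cancel, Real.rpow_zero,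
      sub_self]
  have hslope : Tendsto (fun a => p⁻¹ * slope h (-1 / p) a) (𝓝[>] (-1 / p))
      (𝓝 (p⁻¹ * -(q / c))) :=
    ((hasDerivAt_iff_tendsto_slope.mp hderiv).mono_left
      (nhdsWithin_mono _ fun _ hy => ne_of_gt hy)).const_mul _
  have hlim : p⁻¹ * -(q / c) = -(q / (p + 1)) := by
    simp only [c]; field_simp
  rw [← hlim]
  refine hslope.congr' (eventually_nhdsWithin_of_forall fun a ha => ?_)
  have hax : a - -1 / p ≠ 0 := sub_ne_zero.mpr (ne_of_gt ha)
  rw [slope_def_field, hzero, sub_zero]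
  change _ = h a / (1 + a * p)
  rw [show 1 + a * p = p * (a - -1 / p) by field_simp; ring]
  field_simp

end HardyRemainder

open HardyRemainder in
theorem stmt13 (p q ℓ : ℝ) (hq : 0 < q) (hpq : q ≤ p) (hℓ : 0 < ℓ)
    (L : ℝ → ℝ)
    (hLdef : ∀ a ∈ Set.Ioo (-1 / p) 0,
      L a = (∫ t in (0:ℝ)..1, (t⁻¹ * ∫ u in (0:ℝ)..t, ℓ * (1 - a) * u ^ (-a)) ^ (-p))
        - ((p + 1) / p) ^ q *
            ∫ t in (0:ℝ)..1, (t⁻¹ * ∫ u in (0:ℝ)..t, ℓ * (1 - a) * u ^ (-a)) ^ (-p + q)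
              * (ℓ * (1 - a) * t ^ (-a)) ^ (-q)) :
    (∀ a ∈ Set.Ioo (-1 / p) 0,
      L a = ℓ ^ (-p) * (1 - (1 - a) ^ (-q) * ((p + 1) / p) ^ q) / (1 + a * p)) ∧
    Filter.Tendsto L (nhdsWithin (-1 / p) (Set.Ioi (-1 / p)))
      (nhds (-(q / (p + 1)) * ℓ ^ (-p))) := by
  have hp : 0 < p := hq.trans_le hpq
  have closed_form : ∀ a ∈ Ioo (-1 / p) 0,
      L a = ℓ ^ (-p) * (1 - (1 - a) ^ (-q) * ((p + 1) / p) ^ q) / (1 + a * p) := by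
    rintro a ⟨ha_gt, ha_neg⟩
    have hap : -1 < a * p := by have := (div_lt_iff₀ hp).mp ha_gt; linarith
    rw [hLdef a ⟨ha_gt, ha_neg⟩]
    exact integral_sub_mul_integral_eq hℓ.le (by linarith) ha_neg.ne hap hp.ne' q _
  refine ⟨closed_form, ?_⟩
  rw [mul_comm]
  refine ((tendsto_one_sub_rpow_neg_div hp q).const_mul (ℓ ^ (-p))).congr' ?_
  filter_upwards [Ioo_mem_nhdsGT (div_neg_of_neg_of_pos neg_one_lt_zero hp)] with a ha
  rw [closed_form a ha, mul_div_assoc]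
end
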